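/- arXiv:2208.03612 — 7 statements merged into one kernel-verified Lean document; each statement's English description precedes it below -/
import Mathlib

section
/- If P and Q are complex polynomials with no common roots, Q has only simple roots, and the rational function f = P/Q has nonvanishing derivative, then P'Q - PQ' is a nonzero constant polynomial. -/
open Polynomial

theorem stmt_0 (P Q : ℂ[X]) (hQ : Q ≠ 0)
    (hcoprime : ∀ z : ℂ, ¬(P.eval z = 0 ∧ Q.eval z = 0))
    (hsimple : ∀ z : ℂ, Q.eval z = 0 → Q.derivative.eval z ≠ 0)
    (hnonvanish : ∀ z : ℂ, Q.eval z ≠ 0 →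
      (P.derivative * Q - P * Q.derivative).eval z ≠ 0) :
    ∃ C : ℂ, C ≠ 0 ∧ P.derivative * Q - P * Q.derivative = Polynomial.C C := by
  set W := P.derivative * Q - P * Q.derivative with hW
  have hall : ∀ z : ℂ, W.eval z ≠ 0 := by
    intro z
    by_cases hz : Q.eval z = 0
    · have hP : P.eval z ≠ 0 := fun h => hcoprime z ⟨h, hz⟩
      have hQ' := hsimple z hz
      simp [hW, hz, hP, hQ']
    · exact hnonvanish z hz
  have hWne : W ≠ 0 := by
    intro h
    exact hall 0 (by simp [h])
  have hdeg : W.natDegree = 0 := by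
    by_contra hd
    have : 0 < W.degree :=
      Polynomial.natDegree_pos_iff_degree_pos.mp (Nat.pos_of_ne_zero hd)
    obtain ⟨z, hz⟩ := Complex.exists_root this
    exact hall z hz
  obtain ⟨c, hc⟩ := Polynomial.natDegree_eq_zero.mp hdeg
  refine ⟨c, ?_, hc.symm⟩
  intro h
  apply hWne
  rw [← hc, h, map_zero]
end

section
/- If P and Q are complex polynomials with no common roots, Q has only simple roots, P has only simple roots, and P'Q - PQ' is a nonzero constant, then both P and Q have degree at most 1, i.e., f = P/Q is a Möbius transformation. -/
open Polynomial

theorem stmt_1 (P Q : ℂ[X]) (C : ℂ) (hC : C ≠ 0)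
    (hcoprime : ∀ z : ℂ, ¬(P.eval z = 0 ∧ Q.eval z = 0))
    (hQsimple : ∀ z : ℂ, Q.eval z = 0 → Q.derivative.eval z ≠ 0)
    (hPsimple : ∀ z : ℂ, P.eval z = 0 → P.derivative.eval z ≠ 0)
    (hWronskian : P.derivative * Q - P * Q.derivative = Polynomial.C C) :
    P.natDegree ≤ 1 ∧ Q.natDegree ≤ 1 := by
  have hP0 : P ≠ 0 := by
    rintro rfl
    simp at hWronskian
    exact hC (by simpa using congrArg (Polynomial.eval 0) hWronskian.symm)
  have hQ0 : Q ≠ 0 := by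
    rintro rfl
    simp at hWronskian
    exact hC (by simpa using congrArg (Polynomial.eval 0) hWronskian.symm)
  have hcop : IsCoprime P Q := by
    rw [Polynomial.isCoprime_iff_aeval_ne_zero_of_isAlgClosed (k := ℂ) ℂ]
    intro a
    simp only [aeval_def, eval₂_eq_eval_map, Polynomial.map_id]
    by_contra h
    push_neg at h
    exact hcoprime a ⟨by simpa using h.1, by simpa using h.2⟩
  -- differentiate the Wronskian identity
  have hdiff : P.derivative.derivative * Q = P * Q.derivative.derivative := by
    have := congrArg Polynomial.derivative hWronskian
    simp only [derivative_sub, derivative_mul, derivative_C] at this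
    ring_nf at this ⊢
    linear_combination this
  -- show second derivatives vanish
  have key : ∀ (A B : ℂ[X]), A ≠ 0 → IsCoprime A B →
      A.derivative.derivative * B = A * B.derivative.derivative → A.natDegree ≤ 1 := by
    intro A B hA0 hAB h
    by_contra hdeg
    push_neg at hdeg
    have hA'0 : A.derivative ≠ 0 := by
      intro h0
      have := Polynomial.natDegree_eq_zero_of_derivative_eq_zero h0
      omega
    have hdvd : A ∣ A.derivative.derivative := by
      exact hAB.dvd_of_dvd_mul_right ⟨B.derivative.derivative, h⟩
    have hlt : A.derivative.derivative.degree < A.degree := by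
      calc A.derivative.derivative.degree ≤ A.derivative.degree :=
            A.derivative.degree_derivative_le
        _ < A.degree := Polynomial.degree_derivative_lt hA0
    have hzero : A.derivative.derivative = 0 :=
      Polynomial.eq_zero_of_dvd_of_degree_lt hdvd hlt
    have := Polynomial.natDegree_eq_zero_of_derivative_eq_zero hzero
    have hd : A.derivative.degree = (A.natDegree - 1 : ℕ) :=
      Polynomial.degree_derivative_eq A (by omega)
    have h2 : A.derivative.natDegree = A.natDegree - 1 := by
      rw [Polynomial.natDegree, hd]; rfl
    omega
  refine ⟨key P Q hP0 hcop hdiff, key Q P hQ0 hcop.symm ?_⟩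
  linear_combination -hdiff
end

section
/- Let u(x,y) = log(2e^x / (1 + t² + 2t e^x cos y + e^{2x})) for a fixed parameter t ≥ 0. Then the denominator satisfies 1 + t² + 2t e^x cos y + e^{2x} = |t + e^{x+iy}|² + 1 > 0, so u is defined on all of ℝ², and u satisfies the Liouville equation Δu + e^{2u} = 0 at every point of ℝ². -/
open Real

theorem stmt_3 (t : ℝ) (ht : 0 ≤ t) (x y : ℝ) :
    (iteratedDeriv 2 (fun s : ℝ =>
        Real.log (2 * Real.exp s /
          (1 + t^2 + 2 * t * Real.exp s * Real.cos y + Real.exp (2*s)))) x)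
      + (iteratedDeriv 2 (fun s : ℝ =>
        Real.log (2 * Real.exp x /
          (1 + t^2 + 2 * t * Real.exp x * Real.cos s + Real.exp (2*x)))) y)
      + Real.exp (2 * Real.log (2 * Real.exp x /
          (1 + t^2 + 2 * t * Real.exp x * Real.cos y + Real.exp (2*x)))) = 0 := by
  -- positivity of the denominator
  have hApos : ∀ s c : ℝ, -1 ≤ c → c ≤ 1 →
      0 < 1 + t^2 + 2 * t * Real.exp s * c + Real.exp (2*s) := by
    intro s c h1 h2
    have he : Real.exp (2*s) = Real.exp s * Real.exp s := by
      rw [two_mul, Real.exp_add]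
    nlinarith [Real.exp_pos s, sq_nonneg (t - Real.exp s),
      mul_nonneg (mul_nonneg ht (Real.exp_pos s).le) (by linarith : (0:ℝ) ≤ c + 1)]
  set c := Real.cos y with hc
  set sn := Real.sin y with hsn
  -- A s : denominator in x-direction
  have hA : ∀ s : ℝ, HasDerivAt
      (fun s => 1 + t^2 + 2 * t * Real.exp s * c + Real.exp (2*s))
      (2 * t * Real.exp s * c + 2 * Real.exp (2*s)) s := by
    intro s
    have h1 : HasDerivAt (fun s : ℝ => 2 * t * Real.exp s * c)
        (2 * t * Real.exp s * c) s := by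
      simpa [mul_comm, mul_assoc, mul_left_comm] using
        (((Real.hasDerivAt_exp s).const_mul (2*t)).mul_const c)
    have h2 : HasDerivAt (fun s : ℝ => Real.exp (2*s)) (2 * Real.exp (2*s)) s := by
      simpa [mul_comm] using ((hasDerivAt_id s).const_mul 2).exp
    exact (((hasDerivAt_const s (1 + t^2)).add h1).add h2).congr_deriv (by ring)
  have hAne : ∀ s : ℝ, (1 + t^2 + 2 * t * Real.exp s * c + Real.exp (2*s)) ≠ 0 :=
    fun s => (hApos s c (Real.neg_one_le_cos y) (Real.cos_le_one y)).ne'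
  -- rewrite f1 as log 2 + s - log A
  have hf1 : (fun s : ℝ =>
      Real.log (2 * Real.exp s /
        (1 + t^2 + 2 * t * Real.exp s * c + Real.exp (2*s)))) =
      fun s => Real.log 2 + s - Real.log (1 + t^2 + 2 * t * Real.exp s * c + Real.exp (2*s)) := by
    funext s
    rw [Real.log_div (by positivity) (hAne s), Real.log_mul two_ne_zero (Real.exp_ne_zero s),
      Real.log_exp]
  -- first derivative
  have hd1 : ∀ s : ℝ, HasDerivAt
      (fun s => Real.log 2 + s - Real.log (1 + t^2 + 2 * t * Real.exp s * c + Real.exp (2*s)))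
      (1 - (2 * t * Real.exp s * c + 2 * Real.exp (2*s)) /
        (1 + t^2 + 2 * t * Real.exp s * c + Real.exp (2*s))) s := by
    intro s
    exact (((hasDerivAt_const s (Real.log 2)).add (hasDerivAt_id s)).sub
      ((hA s).log (hAne s))).congr_deriv (by ring)
  have hderiv1 : deriv (fun s : ℝ =>
      Real.log (2 * Real.exp s /
        (1 + t^2 + 2 * t * Real.exp s * c + Real.exp (2*s)))) =
      fun s => 1 - (2 * t * Real.exp s * c + 2 * Real.exp (2*s)) /
        (1 + t^2 + 2 * t * Real.exp s * c + Real.exp (2*s)) := by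
    rw [hf1]; funext s; exact (hd1 s).deriv
  -- second derivative at x
  set A := 1 + t^2 + 2 * t * Real.exp x * c + Real.exp (2*x) with hAdef
  have hApos' : 0 < A := hApos x c (Real.neg_one_le_cos y) (Real.cos_le_one y)
  set A' := 2 * t * Real.exp x * c + 2 * Real.exp (2*x) with hA'def
  set A'' := 2 * t * Real.exp x * c + 4 * Real.exp (2*x) with hA''def
  have hN : HasDerivAt (fun s : ℝ => 2 * t * Real.exp s * c + 2 * Real.exp (2*s)) A'' x := by
    have h1 : HasDerivAt (fun s : ℝ => 2 * t * Real.exp s * c)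
        (2 * t * Real.exp x * c) x := by
      simpa [mul_comm, mul_assoc, mul_left_comm] using
        (((Real.hasDerivAt_exp x).const_mul (2*t)).mul_const c)
    have h2 : HasDerivAt (fun s : ℝ => 2 * Real.exp (2*s)) (4 * Real.exp (2*x)) x := by
      have h := (((hasDerivAt_id x).const_mul 2).exp).const_mul 2
      refine h.congr_deriv ?_
      simp only [id]; ring
    exact h1.add h2
  have hdd1 : HasDerivAt (fun s => 1 - (2 * t * Real.exp s * c + 2 * Real.exp (2*s)) /
        (1 + t^2 + 2 * t * Real.exp s * c + Real.exp (2*s)))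
      (-((A'' * A - A' * A') / A^2)) x := by
    have := (hasDerivAt_const x (1:ℝ)).sub ((hN.div (hA x) (hAne x)))
    refine this.congr_deriv ?_
    rw [← hAdef, ← hA'def]
    ring
  have hux : iteratedDeriv 2 (fun s : ℝ =>
      Real.log (2 * Real.exp s /
        (1 + t^2 + 2 * t * Real.exp s * c + Real.exp (2*s)))) x =
      -((A'' * A - A' * A') / A^2) := by
    rw [iteratedDeriv_succ, iteratedDeriv_one, hderiv1]
    exact hdd1.deriv
  -- y-direction
  have hE : ∀ s : ℝ, HasDerivAt
      (fun s => 1 + t^2 + 2 * t * Real.exp x * Real.cos s + Real.exp (2*x))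
      (-(2 * t * Real.exp x * Real.sin s)) s := by
    intro s
    have h1 : HasDerivAt (fun s : ℝ => 2 * t * Real.exp x * Real.cos s)
        (-(2 * t * Real.exp x * Real.sin s)) s := by
      simpa [mul_comm, mul_assoc, mul_left_comm] using
        (Real.hasDerivAt_cos s).const_mul (2 * t * Real.exp x)
    exact (((hasDerivAt_const s (1 + t^2)).add h1).add (hasDerivAt_const s (Real.exp (2*x)))).congr_deriv (by ring)
  have hEne : ∀ s : ℝ, (1 + t^2 + 2 * t * Real.exp x * Real.cos s + Real.exp (2*x)) ≠ 0 := by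
    intro s
    have := hApos x (Real.cos s) (Real.neg_one_le_cos s) (Real.cos_le_one s)
    intro h
    rw [h] at this; exact lt_irrefl 0 this
  have hg1 : (fun s : ℝ =>
      Real.log (2 * Real.exp x /
        (1 + t^2 + 2 * t * Real.exp x * Real.cos s + Real.exp (2*x)))) =
      fun s => Real.log (2 * Real.exp x) -
        Real.log (1 + t^2 + 2 * t * Real.exp x * Real.cos s + Real.exp (2*x)) := by
    funext s
    rw [Real.log_div (by positivity) (hEne s)]
  have hderiv2 : deriv (fun s : ℝ =>
      Real.log (2 * Real.exp x /
        (1 + t^2 + 2 * t * Real.exp x * Real.cos s + Real.exp (2*x)))) =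
      fun s => (2 * t * Real.exp x * Real.sin s) /
        (1 + t^2 + 2 * t * Real.exp x * Real.cos s + Real.exp (2*x)) := by
    rw [hg1]; funext s
    exact (((hasDerivAt_const s (Real.log (2 * Real.exp x))).sub
      ((hE s).log (hEne s))).congr_deriv (by ring)).deriv
  have hEy : (1 + t^2 + 2 * t * Real.exp x * Real.cos y + Real.exp (2*x)) = A := by
    rw [hAdef, hc]
  have hN2 : HasDerivAt (fun s : ℝ => 2 * t * Real.exp x * Real.sin s)
      (2 * t * Real.exp x * c) y := by
    simpa [hc, mul_comm, mul_assoc, mul_left_comm] using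
      (Real.hasDerivAt_sin y).const_mul (2 * t * Real.exp x)
  have hdd2 : HasDerivAt (fun s => (2 * t * Real.exp x * Real.sin s) /
        (1 + t^2 + 2 * t * Real.exp x * Real.cos s + Real.exp (2*x)))
      ((2 * t * Real.exp x * c * A + (2 * t * Real.exp x * sn)^2) / A^2) y := by
    have := hN2.div (hE y) (hEne y)
    refine this.congr_deriv ?_
    rw [hEy, hc, hsn]
    ring
  have huy : iteratedDeriv 2 (fun s : ℝ =>
      Real.log (2 * Real.exp x /
        (1 + t^2 + 2 * t * Real.exp x * Real.cos s + Real.exp (2*x)))) y =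
      (2 * t * Real.exp x * c * A + (2 * t * Real.exp x * sn)^2) / A^2 := by
    rw [iteratedDeriv_succ, iteratedDeriv_one, hderiv2]
    exact hdd2.deriv
  -- exponential term
  have hexp : Real.exp (2 * Real.log (2 * Real.exp x / A)) = (2 * Real.exp x / A)^2 := by
    rw [two_mul, Real.exp_add, Real.exp_log (by positivity), sq]
  have hpy : sn^2 + c^2 = 1 := Real.sin_sq_add_cos_sq y
  have he2 : Real.exp (2*x) = Real.exp x * Real.exp x := by rw [two_mul, Real.exp_add]
  have key : A'' * A - A' * A' - (2 * t * Real.exp x * c * A + (2 * t * Real.exp x * sn)^2)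
      = (2 * Real.exp x)^2 := by
    rw [hA''def, hA'def, hAdef, he2]
    linear_combination (-4 * t^2 * Real.exp x * Real.exp x) * hpy
  have hAne0 : A ≠ 0 := hApos'.ne'
  rw [hux, huy, hexp, div_pow, ← key]
  field_simp
  ring
end

section
/- For the function u_t(x,y) = log(2e^x/(1+t²+2te^x cos y+e^{2x})) with t ≥ 0, for every fixed y ∈ ℝ the improper integral ∫_{-∞}^{∞} e^{u_t(x,y)} dx equals (2/√(1+t² sin²y)) · (π/2 − arctan(t cos y / √(1+t² sin²y))), and the supremum over y ∈ ℝ of this integral equals π + 2 arctan(t). -/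
/-!
Completing the square, `1 + t² + 2t eˣ cos y + e²ˣ = s² + (eˣ + t cos y)²` with
`s = √(1 + t² sin² y)`, so `x ↦ (2/s) arctan ((eˣ + t cos y)/s)` is an antiderivative of the
integrand and the integral is the difference of its limits at `±∞`. For `t ≥ 0` the closed form
is at most `2 (π/2 + arctan t)`, since `s ≥ 1` and `t cos y / s ≥ -t`, with equality at `y = π`.
-/

open Real MeasureTheory Filter Set Topology

section ArctanExp

variable {a s : ℝ}

lemma hasDerivAt_arctan_exp_add_div_div (hs : s ≠ 0) (x : ℝ) :
    HasDerivAt (fun x => arctan ((exp x + a) / s) / s) (exp x / (s ^ 2 + (exp x + a) ^ 2)) x := by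
  have hinner : HasDerivAt (fun x => (exp x + a) / s) (exp x / s) x :=
    ((hasDerivAt_exp x).add_const a).div_const s
  refine (hinner.arctan.div_const s).congr_deriv ?_
  have : 0 < s ^ 2 + (exp x + a) ^ 2 := by positivity
  field_simp

lemma tendsto_arctan_exp_add_div_div_atTop (hs : 0 < s) :
    Tendsto (fun x => arctan ((exp x + a) / s) / s) atTop (𝓝 (π / 2 / s)) := by
  have hinner : Tendsto (fun x => (exp x + a) / s) atTop atTop :=
    (tendsto_exp_atTop.atTop_add tendsto_const_nhds).atTop_div_const hs
  exact ((tendsto_arctan_atTop.mono_right nhdsWithin_le_nhds).comp hinner).div_const s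

lemma tendsto_arctan_exp_add_div_div_atBot :
    Tendsto (fun x => arctan ((exp x + a) / s) / s) atBot (𝓝 (arctan (a / s) / s)) := by
  have hinner : Tendsto (fun x => (exp x + a) / s) atBot (𝓝 ((0 + a) / s)) :=
    (tendsto_exp_atBot.add tendsto_const_nhds).div_const s
  rw [zero_add] at hinner
  exact ((continuous_arctan.tendsto _).comp hinner).div_const s

lemma integrable_exp_div_sq_add_sq (hs : 0 < s) :
    Integrable fun x => exp x / (s ^ 2 + (exp x + a) ^ 2) := by
  have hnonneg : ∀ x, 0 ≤ exp x / (s ^ 2 + (exp x + a) ^ 2) := fun x => by positivity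
  have hcont : Continuous fun x => exp x / (s ^ 2 + (exp x + a) ^ 2) :=
    continuous_exp.div (by fun_prop) fun x => by positivity
  have hleft : IntegrableOn (fun x => exp x / (s ^ 2 + (exp x + a) ^ 2)) (Iic 0) := by
    refine ((integrableOn_exp_Iic 0).div_const (s ^ 2)).mono' hcont.aestronglyMeasurable.restrict
      (Eventually.of_forall fun x => ?_)
    rw [norm_of_nonneg (hnonneg x)]
    exact div_le_div_of_nonneg_left (exp_pos x).le (by positivity)
      (le_add_of_nonneg_right (sq_nonneg _))
  have hright : IntegrableOn (fun x => exp x / (s ^ 2 + (exp x + a) ^ 2)) (Ioi 0) := by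
    exact integrableOn_Ioi_deriv_of_nonneg' (fun x _ => hasDerivAt_arctan_exp_add_div_div hs.ne' x)
      (fun x _ => hnonneg x) (tendsto_arctan_exp_add_div_div_atTop hs)
  simpa [Iic_union_Ioi] using hleft.union hright

lemma integral_exp_div_sq_add_sq (hs : 0 < s) :
    ∫ x, exp x / (s ^ 2 + (exp x + a) ^ 2) = (π / 2 - arctan (a / s)) / s := by
  rw [integral_of_hasDerivAt_of_tendsto (hasDerivAt_arctan_exp_add_div_div hs.ne')
    (integrable_exp_div_sq_add_sq hs) tendsto_arctan_exp_add_div_div_atBot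
    (tendsto_arctan_exp_add_div_div_atTop hs)]
  ring

end ArctanExp

lemma one_add_sq_add_two_mul_exp_mul_cos_add_exp_two_mul (t x y : ℝ) :
    1 + t ^ 2 + 2 * t * exp x * cos y + exp (2 * x)
      = √(1 + t ^ 2 * sin y ^ 2) ^ 2 + (exp x + t * cos y) ^ 2 := by
  have hexp : exp (2 * x) = exp x ^ 2 := by rw [sq, ← exp_add, two_mul]
  rw [sq_sqrt (by positivity), hexp]
  linear_combination (-t ^ 2) * sin_sq_add_cos_sq y

lemma integral_two_mul_exp_div_one_add_sq_add_two_mul_exp_mul_cos (t y : ℝ) :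
    ∫ x, 2 * exp x / (1 + t ^ 2 + 2 * t * exp x * cos y + exp (2 * x))
      = 2 / √(1 + t ^ 2 * sin y ^ 2) *
          (π / 2 - arctan (t * cos y / √(1 + t ^ 2 * sin y ^ 2))) := by
  have hs : 0 < √(1 + t ^ 2 * sin y ^ 2) := sqrt_pos.mpr (by positivity)
  simp_rw [one_add_sq_add_two_mul_exp_mul_cos_add_exp_two_mul, mul_div_assoc (2 : ℝ)]
  rw [integral_const_mul, integral_exp_div_sq_add_sq hs]
  ring

lemma two_div_sqrt_mul_sub_arctan_le {t : ℝ} (ht : 0 ≤ t) (y : ℝ) :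
    2 / √(1 + t ^ 2 * sin y ^ 2) * (π / 2 - arctan (t * cos y / √(1 + t ^ 2 * sin y ^ 2)))
      ≤ π + 2 * arctan t := by
  set s := √(1 + t ^ 2 * sin y ^ 2)
  have hs : 1 ≤ s := one_le_sqrt.mpr (by nlinarith [sq_nonneg (t * sin y)])
  have harg : -t ≤ t * cos y / s := by
    rw [le_div_iff₀ (by linarith)]
    nlinarith [neg_one_le_cos y]
  have hatan : -arctan t ≤ arctan (t * cos y / s) := by
    rw [← arctan_neg]
    exact arctan_strictMono.monotone harg
  have hpos : 0 ≤ π / 2 - arctan (t * cos y / s) := by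
    linarith [arctan_lt_pi_div_two (t * cos y / s)]
  have hfactor : 2 / s ≤ 2 := div_le_self zero_le_two hs
  calc 2 / s * (π / 2 - arctan (t * cos y / s))
      ≤ 2 * (π / 2 + arctan t) := mul_le_mul hfactor (by linarith) hpos zero_le_two
    _ = π + 2 * arctan t := by ring

theorem stmt_4 (t : ℝ) (ht : 0 ≤ t) :
    (∀ y : ℝ,
      ∫ x : ℝ, 2 * Real.exp x /
          (1 + t^2 + 2 * t * Real.exp x * Real.cos y + Real.exp (2*x))
        = (2 / Real.sqrt (1 + t^2 * (Real.sin y)^2)) *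
            (π/2 - Real.arctan (t * Real.cos y / Real.sqrt (1 + t^2 * (Real.sin y)^2)))) ∧
    (⨆ y : ℝ,
      ∫ x : ℝ, 2 * Real.exp x /
          (1 + t^2 + 2 * t * Real.exp x * Real.cos y + Real.exp (2*x)))
      = π + 2 * Real.arctan t := by
  refine ⟨integral_two_mul_exp_div_one_add_sq_add_two_mul_exp_mul_cos t,
    IsLUB.ciSup_eq (IsGreatest.isLUB ⟨⟨π, ?_⟩, ?_⟩)⟩
  · refine (integral_two_mul_exp_div_one_add_sq_add_two_mul_exp_mul_cos t π).trans ?_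
    simp only [sin_pi, cos_pi, ne_eq, OfNat.ofNat_ne_zero, not_false_eq_true, zero_pow, mul_zero,
      add_zero, sqrt_one, div_one, mul_neg_one, arctan_neg]
    ring
  · rintro _ ⟨y, rfl⟩
    exact (integral_two_mul_exp_div_one_add_sq_add_two_mul_exp_mul_cos t y).trans_le
      (two_div_sqrt_mul_sub_arctan_le ht y)
end

section
/- Let u be a C² radial function on ℝ² satisfying u'' + u'/r + e^{2u} ≤ 0. Define A(r) = 2π∫₀^r ρe^{2u(ρ)}dρ and l(r) = 2πr e^{u(r)}. Then for all r > 0, l(r)² ≤ 4πA(r) − A(r)². -/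
/-!
Set `A = 2π ∫₀^r ρ e^{2u}` and `l = 2π r e^u`. Multiplying the inequality by `r` gives
`(r u')' ≤ -r e^{2u}`, so integrating from `0` yields `A ≤ -2π r u'`. Consequently
`(A² + l² - 4πA)' = 4π r e^{2u} (A + 2π r u') ≤ 0`, and this quantity vanishes at `r = 0`.
-/

open Real

noncomputable def conformalArea (u : ℝ → ℝ) (r : ℝ) : ℝ :=
  2 * π * ∫ ρ in (0:ℝ)..r, ρ * exp (2 * u ρ)

noncomputable def conformalLength (u : ℝ → ℝ) (r : ℝ) : ℝ :=
  2 * π * r * exp (u r)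

lemma conformalArea_zero (u : ℝ → ℝ) : conformalArea u 0 = 0 := by
  simp [conformalArea]

lemma conformalLength_zero (u : ℝ → ℝ) : conformalLength u 0 = 0 := by
  simp [conformalLength]

lemma nonpos_of_hasDerivAt_nonpos {f f' : ℝ → ℝ} (hf : ∀ x, HasDerivAt f (f' x) x)
    (hf0 : f 0 = 0) (hf' : ∀ x, 0 < x → f' x ≤ 0) {r : ℝ} (hr : 0 ≤ r) : f r ≤ 0 := by
  have hanti : AntitoneOn f (Set.Ici 0) := by
    refine antitoneOn_of_deriv_nonpos (convex_Ici 0)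
      (fun x _ => (hf x).continuousAt.continuousWithinAt)
      (fun x _ => (hf x).differentiableAt.differentiableWithinAt) ?_
    rw [interior_Ici]
    exact fun x hx => (hf x).deriv ▸ hf' x hx
  simpa [hf0] using hanti Set.self_mem_Ici hr hr

section Liouville

variable {u : ℝ → ℝ}

lemma hasDerivAt_conformalArea (hu : Continuous u) (r : ℝ) :
    HasDerivAt (conformalArea u) (2 * π * (r * exp (2 * u r))) r := by
  have hcont : Continuous fun ρ => ρ * exp (2 * u ρ) := by fun_prop
  exact (hcont.integral_hasStrictDerivAt 0 r).hasDerivAt.const_mul (2 * π)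

lemma hasDerivAt_conformalLength {r : ℝ} (hu : DifferentiableAt ℝ u r) :
    HasDerivAt (conformalLength u) (2 * π * exp (u r) * (1 + r * deriv u r)) r := by
  have h := ((hasDerivAt_id r).const_mul (2 * π)).mul hu.hasDerivAt.exp
  exact h.congr_deriv (by simp only [id]; ring)

lemma conformalArea_le_neg_mul_deriv (hu : Differentiable ℝ u)
    (hu' : Differentiable ℝ (deriv u))
    (hineq : ∀ r, 0 < r → deriv (deriv u) r + deriv u r / r + exp (2 * u r) ≤ 0)
    {r : ℝ} (hr : 0 ≤ r) : conformalArea u r ≤ -(2 * π * r * deriv u r) := by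
  have hflux : ∀ x, HasDerivAt (fun x => conformalArea u x + 2 * π * x * deriv u x)
      (2 * π * (x * exp (2 * u x) + deriv u x + x * deriv (deriv u) x)) x := fun x =>
    ((hasDerivAt_conformalArea hu.continuous x).add
      (((hasDerivAt_id x).const_mul (2 * π)).mul (hu' x).hasDerivAt)).congr_deriv
      (by simp only [id]; ring)
  have hflux_nonpos : ∀ x, 0 < x →
      2 * π * (x * exp (2 * u x) + deriv u x + x * deriv (deriv u) x) ≤ 0 := by
    intro x hx
    have hrw : x * exp (2 * u x) + deriv u x + x * deriv (deriv u) x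
        = x * (deriv (deriv u) x + deriv u x / x + exp (2 * u x)) := by
      field_simp
      ring
    rw [hrw]
    exact mul_nonpos_of_nonneg_of_nonpos (by positivity)
      (mul_nonpos_of_nonneg_of_nonpos hx.le (hineq x hx))
  have := nonpos_of_hasDerivAt_nonpos hflux (by simp [conformalArea_zero]) hflux_nonpos hr
  linarith

lemma sq_conformalLength_le (hu : Differentiable ℝ u) (hu' : Differentiable ℝ (deriv u))
    (hineq : ∀ r, 0 < r → deriv (deriv u) r + deriv u r / r + exp (2 * u r) ≤ 0)
    {r : ℝ} (hr : 0 ≤ r) :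
    conformalLength u r ^ 2 ≤ 4 * π * conformalArea u r - conformalArea u r ^ 2 := by
  set A := conformalArea u
  set l := conformalLength u
  have hderiv : ∀ x, HasDerivAt (fun x => A x ^ 2 + l x ^ 2 - 4 * π * A x)
      (4 * π * x * exp (2 * u x) * (A x + 2 * π * x * deriv u x)) x := by
    intro x
    have hA := hasDerivAt_conformalArea hu.continuous x
    have hl := hasDerivAt_conformalLength (hu x)
    refine (((hA.pow 2).add (hl.pow 2)).sub (hA.const_mul (4 * π))).congr_deriv ?_
    simp only [conformalLength, two_mul (u x), exp_add]
    ring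
  have hderiv_nonpos : ∀ x, 0 < x →
      4 * π * x * exp (2 * u x) * (A x + 2 * π * x * deriv u x) ≤ 0 := fun x hx =>
    mul_nonpos_of_nonneg_of_nonpos (by positivity)
      (by linarith [conformalArea_le_neg_mul_deriv hu hu' hineq hx.le])
  have := nonpos_of_hasDerivAt_nonpos hderiv
    (by simp [A, l, conformalArea_zero, conformalLength_zero]) hderiv_nonpos hr
  linarith

end Liouville

theorem stmt_9_general (u : ℝ → ℝ) (hu : ContDiff ℝ 2 u)
    (hineq : ∀ r : ℝ, 0 < r →
      deriv (deriv u) r + deriv u r / r + Real.exp (2 * u r) ≤ 0) :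
    ∀ r : ℝ, 0 < r →
      (2 * π * r * Real.exp (u r))^2
        ≤ 4 * π * (2 * π * ∫ ρ in (0:ℝ)..r, ρ * Real.exp (2 * u ρ))
          - (2 * π * ∫ ρ in (0:ℝ)..r, ρ * Real.exp (2 * u ρ))^2 :=
  fun _ hr => sq_conformalLength_le (hu.differentiable (by norm_num))
    hu.differentiable_deriv_two hineq hr.le

theorem stmt_9 (u : ℝ → ℝ) (hu : ContDiff ℝ 2 u) (hu0 : deriv u 0 = 0)
    (hineq : ∀ r : ℝ, 0 < r →
      deriv (deriv u) r + deriv u r / r + Real.exp (2 * u r) ≤ 0) :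
    ∀ r : ℝ, 0 < r →
      (2 * π * r * Real.exp (u r))^2
        ≤ 4 * π * (2 * π * ∫ ρ in (0:ℝ)..r, ρ * Real.exp (2 * u ρ))
          - (2 * π * ∫ ρ in (0:ℝ)..r, ρ * Real.exp (2 * u ρ))^2 :=
  stmt_9_general u hu hineq
end

section
/- For any real numbers A₁, A₂, A_∞, P₁, P₂ with 0 ≤ A₂ ≤ A₁ ≤ A_∞ and P₁, P₂ ≥ 0, if P₁² ≥ A₁(A_∞ − A₁) and P₂² ≥ A₂(A_∞ − A₂), then (P₁ + P₂)² ≥ (A₁ − A₂)(A_∞ − A₁ + A₂). -/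
theorem stmt_13 (A₁ A₂ Ainf P₁ P₂ : ℝ)
    (hA₂ : 0 ≤ A₂) (hA : A₂ ≤ A₁) (hAinf : A₁ ≤ Ainf)
    (hP₁ : 0 ≤ P₁) (hP₂ : 0 ≤ P₂)
    (h1 : P₁^2 ≥ A₁ * (Ainf - A₁)) (h2 : P₂^2 ≥ A₂ * (Ainf - A₂)) :
    (P₁ + P₂)^2 ≥ (A₁ - A₂) * (Ainf - A₁ + A₂) := by
  nlinarith [mul_nonneg hP₁ hP₂, mul_nonneg hA₂ (sub_nonneg.2 hAinf)]
end

section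
/- For nonnegative reals a₁,…,a_n and p₁,…,p_n and A_∞ ≥ a₁ + ⋯ + a_n, if p_i² ≥ a_i(A_∞ − a_i) for each i, then (p₁+⋯+p_n)² ≥ (a₁+⋯+a_n)(A_∞ − (a₁+⋯+a_n)). -/
theorem stmt_14 (n : ℕ) (a p : Fin n → ℝ) (Ainf : ℝ)
    (ha : ∀ i, 0 ≤ a i) (hp : ∀ i, 0 ≤ p i)
    (hAinf : (∑ i, a i) ≤ Ainf)
    (h : ∀ i, (p i)^2 ≥ a i * (Ainf - a i)) :
    (∑ i, p i)^2 ≥ (∑ i, a i) * (Ainf - ∑ i, a i) := by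
  have h1 : ∑ i, (p i)^2 ≤ (∑ i, p i)^2 :=
    Finset.sum_sq_le_sq_sum_of_nonneg (fun i _ => hp i)
  have h2 : ∑ i, (a i)^2 ≤ (∑ i, a i)^2 :=
    Finset.sum_sq_le_sq_sum_of_nonneg (fun i _ => ha i)
  have h3 : ∑ i, a i * (Ainf - a i) ≤ ∑ i, (p i)^2 :=
    Finset.sum_le_sum (fun i _ => h i)
  have h4 : ∑ i, a i * (Ainf - a i) = Ainf * ∑ i, a i - ∑ i, (a i)^2 := by
    rw [Finset.mul_sum, ← Finset.sum_sub_distrib]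
    congr 1; ext i; ring
  nlinarith [h1, h2, h3, h4]
end
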